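/- Let A be a simple two-sided skew brace. Then one of the following holds: (1) A is isomorphic to the trivial skew brace Triv(G) on a simple group G; (2) A is isomorphic to the almost trivial skew brace opTriv(G) on a simple group G; (3) A is a simple two-sided brace (in particular its additive group is abelian). -/
import Mathlib


/-- A skew (left) brace: a type with two group structures `(A,+)` and `(A,∘)`
(the latter written multiplicatively) sharing the same identity, satisfying the
left skew brace law `a ∘ (b + c) = a ∘ b − a + a ∘ c`. -/
class SkewBrace (A : Type*) extends AddGroup A, Group A where
  mul_add_eq : ∀ a b c : A, a * (b + c) = a * b - a + a * c

namespace SkewBrace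

variable {A : Type*}

/-- A skew brace is two-sided if `(a + b) ∘ c = a ∘ c − c + b ∘ c`. -/
def IsTwoSided (A : Type*) [SkewBrace A] : Prop :=
  ∀ a b c : A, (a + b) * c = a * c - c + b * c

/-- `a * b = −a + a∘b − b`. -/
def bstar [SkewBrace A] (a b : A) : A := -a + a * b - b

/-- the star operation of the opposite skew brace: `a *ₒₚ b = −b + a∘b − a`. -/
def bstarOp [SkewBrace A] (a b : A) : A := -b + a * b - a

/-- `X * Y`: the additive subgroup generated by all `x * y`, `x ∈ X`, `y ∈ Y`. -/
def starSet [SkewBrace A] (X Y : Set A) : AddSubgroup A :=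
  AddSubgroup.closure {z | ∃ x ∈ X, ∃ y ∈ Y, z = bstar x y}

/-- `A² = A * A`. -/
def sq (A : Type*) [SkewBrace A] : AddSubgroup A := starSet Set.univ Set.univ

/-- `A²ₒₚ`, the additive subgroup generated by all `a *ₒₚ b`. -/
def sqOp (A : Type*) [SkewBrace A] : AddSubgroup A :=
  AddSubgroup.closure {z | ∃ a b : A, z = bstarOp a b}

/-- A skew brace is weakly trivial if `A² ∩ A²ₒₚ = {0}`. -/
def IsWeaklyTrivial (A : Type*) [SkewBrace A] : Prop := sq A ⊓ sqOp A = ⊥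

/-- An ideal of a skew brace: an additive subgroup, normal in `(A,+)` and in
`(A,∘)`, and invariant under all `λ_a : b ↦ −a + a∘b`. -/
structure IsIdeal [SkewBrace A] (I : AddSubgroup A) : Prop where
  add_conj : ∀ a : A, ∀ x ∈ I, a + x - a ∈ I
  mul_conj : ∀ a : A, ∀ x ∈ I, a * x * a⁻¹ ∈ I
  lambda_mem : ∀ a : A, ∀ x ∈ I, -a + a * x ∈ I

/-- The left series `A¹ = A`, `Aⁿ⁺¹ = A * Aⁿ`; `leftSeries A n` is `Aⁿ⁺¹`. -/
def leftSeries (A : Type*) [SkewBrace A] : ℕ → AddSubgroup A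
  | 0 => ⊤
  | n + 1 => starSet Set.univ (leftSeries A n : Set A)

/-- The right series `A⁽¹⁾ = A`, `A⁽ⁿ⁺¹⁾ = A⁽ⁿ⁾ * A`; `rightSeries A n` is `A⁽ⁿ⁺¹⁾`. -/
def rightSeries (A : Type*) [SkewBrace A] : ℕ → AddSubgroup A
  | 0 => ⊤
  | n + 1 => starSet (rightSeries A n : Set A) Set.univ

/-- A skew brace is left nilpotent if its left series reaches `{0}`. -/
def IsLeftNilpotent (A : Type*) [SkewBrace A] : Prop := ∃ n, leftSeries A n = ⊥

/-- A skew brace is right nilpotent if its right series reaches `{0}`. -/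
def IsRightNilpotent (A : Type*) [SkewBrace A] : Prop := ∃ n, rightSeries A n = ⊥

/-- The series `A⁽¹⁾ = A`, `A^[n+1]` generated by the union of `A^[i] * A^[n+1-i]`;
`strongSeries A n` is `A^[n+1]`. -/
def strongSeries (A : Type*) [SkewBrace A] : ℕ → AddSubgroup A
  | 0 => ⊤
  | n + 1 => ⨆ i : Fin (n + 1),
      starSet (strongSeries A i.val : Set A) (strongSeries A (n - i.val) : Set A)
  decreasing_by
  · exact i.isLt
  · have := i.isLt; omega

/-- A skew brace is strongly nilpotent if the series `A^[n]` reaches `{0}`. -/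
def IsStronglyNilpotent (A : Type*) [SkewBrace A] : Prop := ∃ n, strongSeries A n = ⊥

/-- The derived series of a skew brace: `A₁ = A`, `Aₙ₊₁ = Aₙ * Aₙ`;
`derivedSeriesBrace A n` is `Aₙ₊₁`. -/
def derivedSeriesBrace (A : Type*) [SkewBrace A] : ℕ → AddSubgroup A
  | 0 => ⊤
  | n + 1 => starSet (derivedSeriesBrace A n : Set A) (derivedSeriesBrace A n : Set A)

/-- A skew brace is soluble if its derived series reaches `{0}`. -/
def IsSolubleBrace (A : Type*) [SkewBrace A] : Prop := ∃ n, derivedSeriesBrace A n = ⊥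

end SkewBrace

namespace SkewBrace

/-- A skew brace is simple if its only ideals are `{0}` and itself. -/
def IsSimpleSkewBrace (A : Type*) [SkewBrace A] : Prop :=
  ∀ I : AddSubgroup A, IsIdeal I → I = ⊥ ∨ I = ⊤

end SkewBrace


namespace SkewBrace

variable {A : Type*} [SkewBrace A]

lemma mul_zero'' (a : A) : a * (0 : A) = a := by
  have h := mul_add_eq a 0 0
  rw [add_zero, sub_eq_add_neg, add_assoc] at h
  nth_rewrite 1 [← add_zero (a * (0:A))] at h
  have h2 := add_left_cancel h
  have h3 : a + (0:A) = a + (-a + a * 0) := congrArg (a + ·) h2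
  rw [add_zero, add_neg_cancel_left] at h3
  exact h3.symm

lemma one_eq_zero' : (1 : A) = 0 := by
  have := mul_zero'' (1 : A)
  rw [one_mul] at this; exact this.symm

lemma zero_mul'' (a : A) : (0 : A) * a = a := by
  rw [← one_eq_zero', one_mul]

lemma mul_neg'' (a b : A) : a * (-b) = a + -(a * b) + a := by
  have h : a * b - a + a * (-b) = a := by rw [← mul_add_eq, add_neg_cancel, mul_zero'']
  calc a * (-b) = -(a * b - a) + (a * b - a + a * (-b)) := by rw [neg_add_cancel_left]
    _ = a + -(a * b) + a := by
        rw [h, sub_eq_add_neg, neg_add_rev, neg_neg]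

lemma neg_mul'' (hts : IsTwoSided A) (a b : A) : (-a) * b = b + -(a * b) + b := by
  have h : a * b - b + (-a) * b = b := by rw [← hts, add_neg_cancel, zero_mul'']
  calc (-a) * b = -(a * b - b) + (a * b - b + (-a) * b) := by rw [neg_add_cancel_left]
    _ = b + -(a * b) + b := by
        rw [h, sub_eq_add_neg, neg_add_rev, neg_neg]

lemma key_comm (hts : IsTwoSided A) (a b c d : A) :
    bstarOp b c + bstar a d = bstar a d + bstarOp b c := by
  have h1 : (a + b) * (c + d) = (a * c - c + b * c) - (a + b) + (a * d - d + b * d) := by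
    rw [mul_add_eq, hts, hts]
  have h2 : (a + b) * (c + d) = (a * c - a + a * d) - (c + d) + (b * c - b + b * d) := by
    rw [hts, mul_add_eq, mul_add_eq]
  have h := h1.symm.trans h2
  have h' : -c + (b*c + (-b + (-a + (a*d + (-d + b*d))))) =
      -a + (a*d + (-d + (-c + (b*c + (-b + b*d))))) := by
    apply add_left_cancel (a := a * c)
    simpa [sub_eq_add_neg, neg_add_rev, add_assoc] using h
  have h'' : ((-c + (b*c + -b)) + (-a + (a*d + -d))) + b*d =
      ((-a + (a*d + -d)) + (-c + (b*c + -b))) + b*d := by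
    simpa [add_assoc] using h'
  have h3 := add_right_cancel h''
  simpa [bstar, bstarOp, sub_eq_add_neg, add_assoc] using h3

lemma lam_bstar (c a b : A) :
    -c + c * bstar a b = bstar (c * a) b + -(bstar c b) := by
  simp [bstar, sub_eq_add_neg, mul_add_eq, mul_neg'', mul_assoc, neg_add_rev, add_assoc]

lemma conj_bstar (hts : IsTwoSided A) (c a b : A) :
    c + bstar a b + -c = bstar (a + -c) b + -(bstar (-c) b) := by
  have hts' : ∀ a b c : A, (a + b) * c = a * c - c + b * c := hts
  simp [hts', bstar, sub_eq_add_neg, mul_add_eq, mul_neg'', neg_mul'' hts, mul_assoc,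
    neg_add_rev, add_assoc]

lemma rho_bstar (hts : IsTwoSided A) (a b d : A) :
    bstar a b * d + -d = -(bstar a d) + bstar a (b * d) := by
  have hts' : ∀ a b c : A, (a + b) * c = a * c - c + b * c := hts
  simp [hts', bstar, sub_eq_add_neg, mul_add_eq, mul_neg'', neg_mul'' hts, mul_assoc,
    neg_add_rev, add_assoc]

lemma conj_formula (hts : IsTwoSided A) (c x : A) :
    c * x * c⁻¹ = -c⁻¹ + ((-c + c * x) * c⁻¹ + -c⁻¹) + -(-c⁻¹) := by
  have hts' : ∀ a b c : A, (a + b) * c = a * c - c + b * c := hts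
  simp [hts', sub_eq_add_neg, neg_mul'' hts, mul_assoc, one_eq_zero', neg_add_rev, add_assoc]

lemma lam_bstarOp (c a b : A) :
    -c + c * bstarOp a b = -c + (-(bstarOp c b) + bstarOp (c * a) b) + -(-c) := by
  simp [bstarOp, sub_eq_add_neg, mul_add_eq, mul_neg'', mul_assoc, neg_add_rev, add_assoc]

lemma conj_bstarOp (c a b : A) :
    c + bstarOp a b + -c = bstarOp a (b + -c) + -(bstarOp a (-c)) := by
  simp [bstarOp, sub_eq_add_neg, mul_add_eq, mul_neg'', mul_assoc, neg_add_rev, add_assoc]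

lemma rho_bstarOp (hts : IsTwoSided A) (a b d : A) :
    bstarOp a b * d + -d = d + (bstarOp a (b * d) + -(bstarOp a d)) + -d := by
  have hts' : ∀ a b c : A, (a + b) * c = a * c - c + b * c := hts
  simp [hts', bstarOp, sub_eq_add_neg, mul_add_eq, mul_neg'', neg_mul'' hts, mul_assoc,
    neg_add_rev, add_assoc]

lemma map_mem_closure {S : Set A} (f : A → A) (hadd : ∀ x y : A, f (x + y) = f x + f y)
    (hgen : ∀ z ∈ S, f z ∈ AddSubgroup.closure S) {x : A}
    (hx : x ∈ AddSubgroup.closure S) : f x ∈ AddSubgroup.closure S := by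
  have h : AddSubgroup.closure S ≤
      (AddSubgroup.closure S).comap (AddMonoidHom.mk' f hadd) :=
    (AddSubgroup.closure_le _).2 fun z hz => hgen z hz
  exact h hx

lemma mem_sq (a b : A) : bstar a b ∈ sq A :=
  AddSubgroup.subset_closure ⟨a, Set.mem_univ a, b, Set.mem_univ b, rfl⟩

lemma mem_sqOp (a b : A) : bstarOp a b ∈ sqOp A :=
  AddSubgroup.subset_closure ⟨a, b, rfl⟩

lemma sq_closed (f : A → A) (hadd : ∀ x y : A, f (x + y) = f x + f y)
    (hgen : ∀ a b : A, f (bstar a b) ∈ sq A) : ∀ x ∈ sq A, f x ∈ sq A := by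
  intro x hx
  refine map_mem_closure f hadd ?_ hx
  rintro z ⟨a, -, b, -, rfl⟩
  exact hgen a b

lemma sqOp_closed (f : A → A) (hadd : ∀ x y : A, f (x + y) = f x + f y)
    (hgen : ∀ a b : A, f (bstarOp a b) ∈ sqOp A) : ∀ x ∈ sqOp A, f x ∈ sqOp A := by
  intro x hx
  refine map_mem_closure f hadd ?_ hx
  rintro z ⟨a, b, rfl⟩
  exact hgen a b

lemma lam_add' (c x y : A) : -c + c * (x + y) = (-c + c * x) + (-c + c * y) := by
  simp [mul_add_eq, sub_eq_add_neg, add_assoc]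

lemma conj_add' (c x y : A) : c + (x + y) + -c = (c + x + -c) + (c + y + -c) := by
  simp [add_assoc]

lemma rho_add' (hts : IsTwoSided A) (d x y : A) :
    (x + y) * d + -d = (x * d + -d) + (y * d + -d) := by
  have hts' : ∀ a b c : A, (a + b) * c = a * c - c + b * c := hts
  simp [hts', sub_eq_add_neg, add_assoc]

lemma lam_mem_sq (c : A) : ∀ x ∈ sq A, -c + c * x ∈ sq A :=
  sq_closed _ (lam_add' c) fun a b => by
    rw [lam_bstar]
    exact (sq A).add_mem (mem_sq _ _) ((sq A).neg_mem (mem_sq _ _))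

lemma conj_mem_sq (hts : IsTwoSided A) (c : A) : ∀ x ∈ sq A, c + x + -c ∈ sq A :=
  sq_closed _ (conj_add' c) fun a b => by
    rw [conj_bstar hts]
    exact (sq A).add_mem (mem_sq _ _) ((sq A).neg_mem (mem_sq _ _))

lemma rho_mem_sq (hts : IsTwoSided A) (d : A) : ∀ x ∈ sq A, x * d + -d ∈ sq A :=
  sq_closed _ (rho_add' hts d) fun a b => by
    rw [rho_bstar hts]
    exact (sq A).add_mem ((sq A).neg_mem (mem_sq _ _)) (mem_sq _ _)

lemma mul_conj_sq (hts : IsTwoSided A) (c : A) : ∀ x ∈ sq A, c * x * c⁻¹ ∈ sq A := by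
  intro x hx
  rw [conj_formula hts]
  exact conj_mem_sq hts (-c⁻¹) _ (rho_mem_sq hts c⁻¹ _ (lam_mem_sq c x hx))

lemma conj_mem_sqOp (c : A) : ∀ x ∈ sqOp A, c + x + -c ∈ sqOp A :=
  sqOp_closed _ (conj_add' c) fun a b => by
    rw [conj_bstarOp]
    exact (sqOp A).add_mem (mem_sqOp _ _) ((sqOp A).neg_mem (mem_sqOp _ _))

lemma lam_mem_sqOp (c : A) : ∀ x ∈ sqOp A, -c + c * x ∈ sqOp A :=
  sqOp_closed _ (lam_add' c) fun a b => by
    rw [lam_bstarOp]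
    exact conj_mem_sqOp (-c) _
      ((sqOp A).add_mem ((sqOp A).neg_mem (mem_sqOp _ _)) (mem_sqOp _ _))

lemma rho_mem_sqOp (hts : IsTwoSided A) (d : A) : ∀ x ∈ sqOp A, x * d + -d ∈ sqOp A :=
  sqOp_closed _ (rho_add' hts d) fun a b => by
    rw [rho_bstarOp hts]
    exact conj_mem_sqOp d _
      ((sqOp A).add_mem (mem_sqOp _ _) ((sqOp A).neg_mem (mem_sqOp _ _)))

lemma mul_conj_sqOp (hts : IsTwoSided A) (c : A) : ∀ x ∈ sqOp A, c * x * c⁻¹ ∈ sqOp A := by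
  intro x hx
  rw [conj_formula hts]
  exact conj_mem_sqOp (-c⁻¹) _ (rho_mem_sqOp hts c⁻¹ _ (lam_mem_sqOp c x hx))

lemma sq_isIdeal (hts : IsTwoSided A) : IsIdeal (sq A) := by
  refine ⟨?_, ?_, ?_⟩
  · intro a x hx
    rw [sub_eq_add_neg]
    exact conj_mem_sq hts a x hx
  · exact fun a x hx => mul_conj_sq hts a x hx
  · exact fun a x hx => lam_mem_sq a x hx

lemma sqOp_isIdeal (hts : IsTwoSided A) : IsIdeal (sqOp A) := by
  refine ⟨?_, ?_, ?_⟩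
  · intro a x hx
    rw [sub_eq_add_neg]
    exact conj_mem_sqOp a x hx
  · exact fun a x hx => mul_conj_sqOp hts a x hx
  · exact fun a x hx => lam_mem_sqOp a x hx

end SkewBrace

open SkewBrace in
/-- A simple two-sided skew brace is either a trivial skew brace on a simple group,
an almost trivial skew brace on a simple group, or a (simple two-sided) brace, i.e.
its additive group is abelian. -/
theorem simple_two_sided_trichotomy (A : Type*) [SkewBrace A]
    (hts : IsTwoSided A) (hs : IsSimpleSkewBrace A) :
    ((∀ a b : A, a * b = a + b) ∧ IsSimpleGroup A) ∨
    ((∀ a b : A, a * b = b + a) ∧ IsSimpleGroup A) ∨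
    (∀ a b : A, a + b = b + a) := by
  classical
  rcases hs (sq A) (sq_isIdeal hts) with h1 | h1
  · -- A² = 0 : trivial skew brace
    have hmul : ∀ a b : A, a * b = a + b := by
      intro a b
      have h := mem_sq a b
      rw [h1, AddSubgroup.mem_bot] at h
      have h' : -a + a * b = b := by
        have hz : -a + a * b - b = 0 := h
        rwa [sub_eq_zero] at hz
      calc a * b = a + (-a + a * b) := (add_neg_cancel_left _ _).symm
        _ = a + b := by rw [h']
    by_cases hab : ∀ x y : A, x + y = y + x
    · exact Or.inr (Or.inr hab)
    · left
      refine ⟨hmul, ?_⟩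
      push_neg at hab
      obtain ⟨x, y, hxy⟩ := hab
      have hnt : Nontrivial A := ⟨⟨x, 0, fun h => hxy (by rw [h, zero_add, add_zero])⟩⟩
      have hinv : ∀ a : A, a⁻¹ = -a := by
        intro a
        have h0 : a + a⁻¹ = 0 := by rw [← hmul, mul_inv_cancel, one_eq_zero']
        exact eq_neg_of_add_eq_zero_right h0
      haveI := hnt
      refine ⟨fun H hH => ?_⟩
      set I : AddSubgroup A :=
        { carrier := H,
          add_mem' := fun {p q} hp hq => by
            rw [show p + q = p * q from (hmul p q).symm]
            exact H.mul_mem hp hq,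
          zero_mem' := by rw [← one_eq_zero']; exact H.one_mem,
          neg_mem' := fun {p} hp => by rw [← hinv]; exact H.inv_mem hp } with hIdef
      have hII : IsIdeal I := by
        refine ⟨?_, ?_, ?_⟩
        · intro a p hp
          have h5 : a * p * a⁻¹ = a + p - a := by
            rw [hmul (a * p) a⁻¹, hmul a p, hinv a, sub_eq_add_neg]
          rw [← h5]
          exact hH.conj_mem p hp a
        · exact fun a p hp => hH.conj_mem p hp a
        · intro a p hp
          have h5 : -a + a * p = p := by rw [hmul, neg_add_cancel_left]
          rw [h5]
          exact hp
      rcases hs I hII with hb | hb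
      · left
        rw [Subgroup.eq_bot_iff_forall]
        intro p hp
        have hpI : p ∈ I := hp
        rw [hb, AddSubgroup.mem_bot] at hpI
        rw [hpI]
        exact one_eq_zero'.symm
      · right
        rw [Subgroup.eq_top_iff']
        intro p
        have hpI : p ∈ I := by rw [hb]; trivial
        exact hpI
  · rcases hs (sqOp A) (sqOp_isIdeal hts) with h2 | h2
    · -- A²ₒₚ = 0 : almost trivial skew brace
      have hmul : ∀ a b : A, a * b = b + a := by
        intro a b
        have h := mem_sqOp a b
        rw [h2, AddSubgroup.mem_bot] at h
        have h' : -b + a * b = a := by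
          have hz : -b + a * b - a = 0 := h
          rwa [sub_eq_zero] at hz
        calc a * b = b + (-b + a * b) := (add_neg_cancel_left _ _).symm
          _ = b + a := by rw [h']
      by_cases hab : ∀ x y : A, x + y = y + x
      · exact Or.inr (Or.inr hab)
      · right; left
        refine ⟨hmul, ?_⟩
        push_neg at hab
        obtain ⟨x, y, hxy⟩ := hab
        have hnt : Nontrivial A := ⟨⟨x, 0, fun h => hxy (by rw [h, zero_add, add_zero])⟩⟩
        have hinv : ∀ a : A, a⁻¹ = -a := by
          intro a
          have h0 : a⁻¹ + a = 0 := by rw [← hmul, mul_inv_cancel, one_eq_zero']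
          exact eq_neg_of_add_eq_zero_left h0
        haveI := hnt
        refine ⟨fun H hH => ?_⟩
        set I : AddSubgroup A :=
          { carrier := H,
            add_mem' := fun {p q} hp hq => by
              rw [show p + q = q * p from (hmul q p).symm]
              exact H.mul_mem hq hp,
            zero_mem' := by rw [← one_eq_zero']; exact H.one_mem,
            neg_mem' := fun {p} hp => by rw [← hinv]; exact H.inv_mem hp } with hIdef
        have hII : IsIdeal I := by
          refine ⟨?_, ?_, ?_⟩
          · intro a p hp
            have h5 : a⁻¹ * p * a = a + p - a := by
              rw [mul_assoc, hmul a⁻¹ (p * a), hmul p a, hinv a, sub_eq_add_neg]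
            rw [← h5]
            have := hH.conj_mem p hp a⁻¹
            rwa [inv_inv] at this
          · exact fun a p hp => hH.conj_mem p hp a
          · intro a p hp
            have h5 : a * p * a⁻¹ = -a + a * p := by
              rw [hmul (a * p) a⁻¹, hinv a]
            rw [← h5]
            exact hH.conj_mem p hp a
        rcases hs I hII with hb | hb
        · left
          rw [Subgroup.eq_bot_iff_forall]
          intro p hp
          have hpI : p ∈ I := hp
          rw [hb, AddSubgroup.mem_bot] at hpI
          rw [hpI]
          exact one_eq_zero'.symm
        · right
          rw [Subgroup.eq_top_iff']
          intro p
          have hpI : p ∈ I := by rw [hb]; trivial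
          exact hpI
    · -- A² = A²ₒₚ = A : additive group is abelian
      right; right
      intro x y
      have hy : y ∈ sq A := by rw [h1]; trivial
      have hx : x ∈ sqOp A := by rw [h2]; trivial
      have hcent : sqOp A ≤ AddSubgroup.centralizer (sq A : Set A) := by
        refine (AddSubgroup.closure_le _).2 ?_
        rintro z ⟨a, b, rfl⟩
        rw [SetLike.mem_coe, AddSubgroup.mem_centralizer_iff]
        intro g hg
        have hsub : sq A ≤ AddSubgroup.centralizer {bstarOp a b} := by
          refine (AddSubgroup.closure_le _).2 ?_
          rintro w ⟨p, -, q, -, rfl⟩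
          rw [SetLike.mem_coe, AddSubgroup.mem_centralizer_iff]
          rintro h rfl
          exact key_comm hts p a b q
        have := hsub hg
        rw [AddSubgroup.mem_centralizer_iff] at this
        exact (this (bstarOp a b) rfl).symm
      have hxc := hcent hx
      rw [AddSubgroup.mem_centralizer_iff] at hxc
      exact (hxc y hy).symm
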